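/- arXiv:2009.01622 — 7 statements merged into one kernel-verified Lean document; each statement's English description precedes it below -/
import Mathlib

section
/- For ω₁, ..., ωₙ in a field extension of 𝔽_q (with Frobenius x ↦ x^q), the Moore determinant M(ω₁,...,ωₙ) = det(ωᵢ^{q^{j-1}})_{1≤i,j≤n} is nonzero if and only if ω₁,...,ωₙ are linearly independent over 𝔽_q. -/
/-!
The rows of the Moore matrix are the images of the `ωᵢ` under the `F`-linear map
`x ↦ (x ^ q ^ j)ⱼ`, so a relation `∑ cᵢ ωᵢ = 0` over `F` is a relation between the rows.
Conversely, a kernel vector `v` of the Moore matrix gives the `q`-polynomial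
`P = ∑ vⱼ X ^ q ^ j` vanishing at every `ωᵢ`. Since `x ↦ P(x)` is `F`-linear, `P` vanishes on
the `F`-span of the `ωᵢ`, which has `q ^ n` elements when they are independent, while
`deg P < q ^ n`. Hence `P = 0`, i.e. `v = 0`.
-/

open Polynomial Matrix

def mooreMatrix {R : Type*} [Semiring R] (q : ℕ) {n : ℕ} (ω : Fin n → R) :
    Matrix (Fin n) (Fin n) R :=
  Matrix.of fun i j => ω i ^ q ^ (j : ℕ)

noncomputable def linearizedPolynomial {R : Type*} [Semiring R] (q : ℕ) {n : ℕ}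
    (v : Fin n → R) : R[X] :=
  ∑ j : Fin n, C (v j) * X ^ q ^ (j : ℕ)

section linearizedPolynomial

variable {R : Type*} [CommSemiring R] {q n : ℕ} (v : Fin n → R)

theorem eval_linearizedPolynomial (x : R) :
    (linearizedPolynomial q v).eval x = ∑ j, v j * x ^ q ^ (j : ℕ) := by
  simp [linearizedPolynomial, eval_finsetSum]

theorem coeff_linearizedPolynomial_pow (hq : 1 < q) (j : Fin n) :
    (linearizedPolynomial q v).coeff (q ^ (j : ℕ)) = v j := by
  have hinj : Function.Injective fun k : Fin n => q ^ (k : ℕ) :=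
    (Nat.pow_right_injective hq).comp Fin.val_injective
  simp only [linearizedPolynomial, finsetSum_coeff, coeff_C_mul_X_pow]
  rw [Finset.sum_eq_single j (fun k _ hk => if_neg fun h => hk (hinj h.symm)) (by simp), if_pos rfl]

theorem linearizedPolynomial_ne_zero (hq : 1 < q) (hv : v ≠ 0) :
    linearizedPolynomial q v ≠ 0 := by
  obtain ⟨j, hj⟩ := Function.ne_iff.mp hv
  exact fun h => hj (by rw [← coeff_linearizedPolynomial_pow v hq j, h, coeff_zero]; rfl)

theorem natDegree_linearizedPolynomial_lt (hq : 1 < q) :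
    (linearizedPolynomial q v).natDegree < q ^ n := by
  cases n with
  | zero => simp [linearizedPolynomial]
  | succ m =>
    refine (natDegree_sum_le_of_forall_le _ _ fun j _ => ?_).trans_lt
      (Nat.pow_lt_pow_right hq m.lt_succ_self)
    exact (natDegree_C_mul_X_pow_le _ _).trans
      (Nat.pow_le_pow_right (by omega) (Nat.le_of_lt_succ j.2))

end linearizedPolynomial

theorem mooreMatrix_mulVec {R : Type*} [CommSemiring R] (q : ℕ) {n : ℕ} (ω v : Fin n → R) :
    mooreMatrix q ω *ᵥ v = fun i => (linearizedPolynomial q v).eval (ω i) := by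
  ext i
  simp [mooreMatrix, mulVec, dotProduct, eval_linearizedPolynomial, mul_comm]

theorem LinearIndependent.of_det_ne_zero_comp {K L M ι : Type*} [CommRing K] [CommRing L]
    [IsDomain L] [Algebra K L] [FaithfulSMul K L] [AddCommGroup M] [Module K M] [Fintype ι]
    [DecidableEq ι]
    (Φ : M →ₗ[K] ι → L) {ω : ι → M} (h : (Matrix.of (Φ ∘ ω)).det ≠ 0) : LinearIndependent K ω :=
  ((Matrix.linearIndependent_rows_of_det_ne_zero h).restrict_scalars' K).of_comp Φ

namespace FiniteField

variable {F L : Type*} [Field F] [Fintype F]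

theorem frobeniusAlgHom_pow_apply [CommRing L] [Algebra F L] (j : ℕ) (x : L) :
    (frobeniusAlgHom F L ^ j) x = x ^ Fintype.card F ^ j := by
  rw [AlgHom.coe_pow, coe_frobeniusAlgHom, pow_iterate]

variable [CommRing L] [IsDomain L] [Algebra F L] {n : ℕ} {ω : Fin n → L}

theorem linearIndependent_of_det_mooreMatrix_ne_zero
    (h : (mooreMatrix (Fintype.card F) ω).det ≠ 0) : LinearIndependent F ω := by
  refine .of_det_ne_zero_comp
    (LinearMap.pi fun j : Fin n => (frobeniusAlgHom F L ^ (j : ℕ)).toLinearMap) ?_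
  convert h using 2
  ext i j
  simp only [mooreMatrix, of_apply, Function.comp_apply, LinearMap.pi_apply,
    AlgHom.toLinearMap_apply, frobeniusAlgHom_pow_apply]

theorem det_mooreMatrix_ne_zero_of_linearIndependent (hω : LinearIndependent F ω) :
    (mooreMatrix (Fintype.card F) ω).det ≠ 0 := by
  intro hdet
  obtain ⟨v, hv, hMv⟩ := Matrix.exists_mulVec_eq_zero_iff.mpr hdet
  set P := linearizedPolynomial (Fintype.card F) v
  set ψ : L →ₗ[F] L := ∑ j : Fin n, v j • (frobeniusAlgHom F L ^ (j : ℕ)).toLinearMap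
  have hψ : ∀ x, P.eval x = ψ x := fun x => by
    simp only [P, ψ, eval_linearizedPolynomial, LinearMap.sum_apply,
      LinearMap.smul_apply, AlgHom.toLinearMap_apply, frobeniusAlgHom_pow_apply, smul_eq_mul]
  have hω_roots : ∀ i, P.eval (ω i) = 0 := congrFun (mooreMatrix_mulVec _ ω v ▸ hMv)
  have hroots : ∀ g : Fin n → F, P.eval (Fintype.linearCombination F ω g) = 0 := fun g => by
    rw [hψ, Fintype.linearCombination_apply, map_sum]
    exact Finset.sum_eq_zero fun i _ => by rw [map_smul, ← hψ, hω_roots, smul_zero]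
  refine linearizedPolynomial_ne_zero v Fintype.one_lt_card hv <|
    eq_zero_of_natDegree_lt_card_of_eval_eq_zero P hω.fintypeLinearCombination_injective hroots ?_
  simpa using natDegree_linearizedPolynomial_lt v Fintype.one_lt_card

end FiniteField

/-- For `ω₁, …, ωₙ` in a field extension `L` of the finite field `F = 𝔽_q`
(with `q = #F`), the Moore determinant `M(ω₁,…,ωₙ) = det (ωᵢ^{q^{j-1}})` is nonzero
iff `ω₁,…,ωₙ` are linearly independent over `F`. -/
theorem moore_det_ne_zero_iff_linearIndependent
    {F L : Type*} [Field F] [Fintype F] [Field L] [Algebra F L]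
    (q : ℕ) (hq : Fintype.card F = q) (n : ℕ) (ω : Fin n → L) :
    Matrix.det (Matrix.of fun i j : Fin n => ω i ^ q ^ (j : ℕ)) ≠ 0 ↔
      LinearIndependent F ω := by
  subst hq
  exact ⟨FiniteField.linearIndependent_of_det_mooreMatrix_ne_zero,
    FiniteField.det_mooreMatrix_ne_zero_of_linearIndependent⟩
end

section
/- Let Λ be a finite 𝔽_q-vector subspace of a field L of characteristic p containing 𝔽_q, of dimension n with basis ω₁,...,ωₙ. Then the polynomial e_Λ(X) = X·∏_{0≠λ∈Λ}(1 - X/λ) satisfies e_Λ(X) = (-1)^n · M(ω₁,...,ωₙ,X) / M(ω₁,...,ωₙ)^q, where M denotes the Moore determinant. -/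
open Polynomial

/-- If `Λ` is a finite `𝔽_q`-subspace of `L` of dimension `n` with basis
`ω₁, …, ωₙ`, then `e_Λ(X) = X·∏_{0≠λ∈Λ}(1 - X/λ)` satisfies
`M(ω₁,…,ωₙ)^q · e_Λ(X) = (-1)^n · M(ω₁,…,ωₙ,X)`, i.e.
`e_Λ(X) = (-1)^n · M(ω₁,…,ωₙ,X)/M(ω₁,…,ωₙ)^q`, where `M` denotes the Moore determinant
(of size `n+1` with last row `(X, X^q, …, X^{q^n})` in the second occurrence). -/
theorem exponential_eq_moore_quotient
    {F L : Type*} [Field F] [Fintype F] [Field L] [Algebra F L] [DecidableEq L]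
    (q : ℕ) (hq : Fintype.card F = q) (n : ℕ) (ω : Fin n → L)
    (hind : LinearIndependent F ω)
    (Λ : Finset L)
    (hΛ : (Λ : Set L) = (Submodule.span F (Set.range ω) : Set L)) :
    C (Matrix.det (Matrix.of fun i j : Fin n => ω i ^ q ^ (j : ℕ)) ^ q) *
        (X * ∏ l ∈ Λ.erase 0, (1 - C l⁻¹ * X)) =
      C ((-1 : L) ^ n) *
        Matrix.det (Matrix.of fun i j : Fin (n + 1) =>
          if h : (i : ℕ) < n then C (ω ⟨(i : ℕ), h⟩ ^ q ^ (j : ℕ))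
          else X ^ q ^ (j : ℕ)) := by
  classical
  set M0 : L := Matrix.det (Matrix.of fun i j : Fin n => ω i ^ q ^ (j : ℕ)) with hM0
  set A : Matrix (Fin (n+1)) (Fin (n+1)) L[X] := Matrix.of fun i j : Fin (n + 1) =>
          if h : (i : ℕ) < n then C (ω ⟨(i : ℕ), h⟩ ^ q ^ (j : ℕ))
          else X ^ q ^ (j : ℕ) with hA
  set D : L[X] := A.det with hD
  -- characteristic facts
  have hq2 : 2 ≤ q := hq ▸ Fintype.one_lt_card
  haveI : CharP F (ringChar F) := ringChar.charP F
  obtain ⟨k, hpp, hcard⟩ := FiniteField.card F (ringChar F)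
  haveI : Fact (ringChar F).Prime := ⟨hpp⟩
  haveI : CharP L (ringChar F) := charP_of_injective_algebraMap (algebraMap F L).injective _
  rw [hq] at hcard
  -- ring hom x ↦ x ^ q ^ j on L
  have hψ : ∀ j : ℕ, ∃ ψ : L →+* L, ∀ x : L, ψ x = x ^ q ^ j := by
    intro j
    refine ⟨iterateFrobenius L (ringChar F) (k * j), fun x => ?_⟩
    rw [iterateFrobenius_def, pow_mul, ← hcard]
  -- algebraMap-fixed under q-powers
  have halg : ∀ (c : F) (j : ℕ), (algebraMap F L c) ^ q ^ j = algebraMap F L c := by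
    intro c j
    rw [← map_pow]
    congr 1
    rw [← hq]
    exact FiniteField.pow_card_pow _ _
  -- the minors
  set d : Fin (n+1) → L := fun j =>
    Matrix.det (Matrix.of fun i j' : Fin n => ω i ^ q ^ ((j.succAbove j' : ℕ))) with hd
  -- Laplace expansion along the last row
  have hDsum : D = ∑ j : Fin (n+1), C ((-1 : L) ^ ((n : ℕ) + (j : ℕ)) * d j) * X ^ q ^ (j : ℕ) := by
    rw [hD, Matrix.det_succ_row A (Fin.last n)]
    refine Finset.sum_congr rfl fun j _ => ?_
    have h1 : A (Fin.last n) j = X ^ q ^ (j : ℕ) := by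
      simp [hA, Fin.val_last]
    have h2 : A.submatrix (Fin.last n).succAbove j.succAbove =
        (Matrix.of fun i j' : Fin n => ω i ^ q ^ ((j.succAbove j' : ℕ))).map C := by
      ext i j'
      simp [hA, Fin.succAbove_last, Matrix.submatrix, Fin.is_lt]
    rw [h1, h2, ← RingHom.mapMatrix_apply, ← RingHom.map_det]
    push_cast
    rw [map_mul, map_pow, map_neg, map_one]
    ring
  -- coefficients of D
  have hqinj : Function.Injective (fun j : ℕ => q ^ j) := Nat.pow_right_injective hq2
  have hcoeff : ∀ j0 : Fin (n+1), D.coeff (q ^ (j0 : ℕ)) = (-1 : L) ^ ((n : ℕ) + (j0 : ℕ)) * d j0 := by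
    intro j0
    rw [hDsum, Polynomial.finset_sum_coeff]
    rw [Finset.sum_eq_single j0]
    · rw [Polynomial.coeff_C_mul, Polynomial.coeff_X_pow, if_pos rfl, mul_one]
    · intro j _ hne
      have h2 : ¬ (q ^ (j : ℕ) = q ^ (j0 : ℕ)) := fun h => hne (Fin.ext (hqinj h))
      rw [Polynomial.coeff_C_mul, Polynomial.coeff_X_pow, if_neg (Ne.symm h2), mul_zero]
    · intro h; exact absurd (Finset.mem_univ j0) h
  have hdn : d (Fin.last n) = M0 := by
    have h : (Matrix.of fun i j' : Fin n => ω i ^ q ^ (((Fin.last n).succAbove j' : ℕ))) =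
        Matrix.of fun i j : Fin n => ω i ^ q ^ (j : ℕ) := by
      ext i j'
      simp [Fin.succAbove_last]
    rw [hd]
    simp only [h, hM0]
  have hd0 : d 0 = M0 ^ q := by
    obtain ⟨ψ, hψ1⟩ := hψ 1
    have : (Matrix.of fun i j' : Fin n => ω i ^ q ^ (((0 : Fin (n+1)).succAbove j' : ℕ))) =
        (Matrix.of fun i j : Fin n => ω i ^ q ^ (j : ℕ)).map ψ := by
      ext i j'
      simp only [Matrix.map_apply, Matrix.of_apply, hψ1, Fin.succAbove_zero,
        Function.comp_apply, Fin.val_succ]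
      rw [← pow_mul, pow_one, pow_succ]
    rw [hd]
    simp only [this]
    rw [← RingHom.mapMatrix_apply, ← RingHom.map_det, hψ1, pow_one, hM0]
  -- cardinality of Λ
  have hΛcard : Λ.card = q ^ n := by
    have h1 : (Λ : Set L).ncard = q ^ n := by
      rw [hΛ]
      have b : Module.Basis (Fin n) F (Submodule.span F (Set.range ω)) := Module.Basis.span hind
      have h2 : Nat.card (Submodule.span F (Set.range ω)) = q ^ n := by
        rw [Nat.card_congr b.equivFun.toEquiv, Nat.card_pi]
        simp [Nat.card_eq_fintype_card, hq]
      rw [← Nat.card_coe_set_eq]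
      exact h2
    rw [Set.ncard_coe_finset] at h1
    exact h1
  -- every element of Λ is a root of D
  have hroot : ∀ l ∈ Λ, D.IsRoot l := by
    intro l hl
    have hlmem : l ∈ Submodule.span F (Set.range ω) := by
      rw [← SetLike.mem_coe, ← hΛ]; exact hl
    obtain ⟨c, hc⟩ := (Submodule.mem_span_range_iff_exists_fun F).mp hlmem
    set B : Matrix (Fin (n+1)) (Fin (n+1)) L := A.map (Polynomial.evalRingHom l) with hB
    have hDB : D.eval l = B.det := by
      rw [hD, hB, ← RingHom.mapMatrix_apply, ← RingHom.map_det]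
      rfl
    set c' : Fin (n+1) → L := fun i =>
      if h : (i : ℕ) < n then algebraMap F L (c ⟨(i : ℕ), h⟩) else 0 with hc'
    have hrow : B.updateRow (Fin.last n) (∑ m, c' m • B m) = B := by
      have hsum : (∑ m, c' m • B m) = B (Fin.last n) := by
        funext j
        obtain ⟨ψ, hψj⟩ := hψ (j : ℕ)
        have hBl : B (Fin.last n) j = l ^ q ^ (j : ℕ) := by
          simp [hB, hA, Matrix.map_apply, Fin.val_last]
        have hBc : ∀ i : Fin n, B (Fin.castSucc i) j = ω i ^ q ^ (j : ℕ) := by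
          intro i
          simp [hB, hA, Matrix.map_apply, Fin.is_lt]
        have hl2 : l ^ q ^ (j : ℕ) = ∑ i : Fin n, algebraMap F L (c i) * ω i ^ q ^ (j : ℕ) := by
          rw [← hψj, ← hc, map_sum]
          refine Finset.sum_congr rfl fun i _ => ?_
          rw [Algebra.smul_def, map_mul, hψj, hψj, halg]
        rw [hBl, hl2, Finset.sum_apply, Fin.sum_univ_castSucc]
        have hclast : c' (Fin.last n) = 0 := by simp [hc', Fin.val_last]
        rw [Pi.smul_apply, hclast, zero_smul, add_zero]
        refine Finset.sum_congr rfl fun i _ => ?_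
        rw [Pi.smul_apply, hBc i, smul_eq_mul]
        congr 1
        simp [hc', Fin.is_lt]
      rw [hsum, Matrix.updateRow_eq_self]
    have := Matrix.det_updateRow_sum B (Fin.last n) c'
    rw [hrow] at this
    have hzero : B.det = 0 := by
      rw [this]
      have : c' (Fin.last n) = 0 := by simp [hc', Fin.val_last]
      rw [this, zero_smul]
    rw [Polynomial.IsRoot, hDB, hzero]
  -- divisibility
  have hPdvd : (∏ l ∈ Λ, (X - C l)) ∣ D := by
    by_cases hD0 : D = 0
    · rw [hD0]; exact dvd_zero _
    have hle : Λ.val ≤ D.roots := by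
      rw [Multiset.le_iff_count]
      intro a
      by_cases ha : a ∈ Λ
      · rw [Multiset.count_eq_one_of_mem Λ.nodup ha]
        have hmem : a ∈ D.roots := by
          rw [Polynomial.mem_roots hD0]
          exact hroot a ha
        exact Nat.succ_le_of_lt (Multiset.count_pos.mpr hmem)
      · rw [Multiset.count_eq_zero_of_notMem ha]; exact Nat.zero_le _
    calc (∏ l ∈ Λ, (X - C l)) = (Λ.val.map fun a => X - C a).prod := rfl
      _ ∣ (D.roots.map fun a => X - C a).prod :=
          Multiset.prod_dvd_prod_of_le (Multiset.map_le_map hle)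
      _ ∣ D := D.prod_multiset_X_sub_C_dvd
  have hPmonic : (∏ l ∈ Λ, (X - C l)).Monic := monic_prod_of_monic _ _ fun l _ => monic_X_sub_C l
  have hPdeg : (∏ l ∈ Λ, (X - C l)).natDegree = q ^ n := by
    rw [Polynomial.natDegree_prod_of_monic _ _ fun l _ => monic_X_sub_C l]
    simp [Polynomial.natDegree_X_sub_C, hΛcard]
  have hDdeg : D.natDegree ≤ q ^ n := by
    rw [hDsum]
    refine Polynomial.natDegree_sum_le_of_forall_le _ _ fun j _ => ?_
    refine (Polynomial.natDegree_C_mul_le _ _).trans ?_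
    rw [Polynomial.natDegree_X_pow]
    exact Nat.pow_le_pow_right (by omega) (Fin.is_le j)
  have htop : D.coeff (q ^ n) = M0 := by
    have h := hcoeff (Fin.last n)
    rw [Fin.val_last] at h
    rw [h, hdn, Even.neg_one_pow ⟨n, rfl⟩, one_mul]
  have hDP : D = C M0 * ∏ l ∈ Λ, (X - C l) := by
    obtain ⟨R, hR⟩ := hPdvd
    by_cases hD0 : D = 0
    · have hM00 : M0 = 0 := by rw [← htop, hD0, Polynomial.coeff_zero]
      rw [hD0, hM00, map_zero, zero_mul]
    · have hR0 : R ≠ 0 := fun h => hD0 (by rw [hR, h, mul_zero])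
      have hP0 : (∏ l ∈ Λ, (X - C l)) ≠ 0 := hPmonic.ne_zero
      have hdeg : D.natDegree = q ^ n + R.natDegree := by
        rw [hR, Polynomial.natDegree_mul hP0 hR0, hPdeg]
      have hRdeg : R.natDegree = 0 := by omega
      obtain ⟨r, hr⟩ := Polynomial.natDegree_eq_zero.mp hRdeg
      have hrM : r = M0 := by
        rw [← htop, hR, ← hr, Polynomial.coeff_mul_C, ← hPdeg,
          hPmonic.coeff_natDegree, one_mul]
      rw [hR, ← hr, hrM, mul_comm]
  have h0Λ : (0 : L) ∈ Λ := by
    rw [← Finset.mem_coe, hΛ]; exact Submodule.zero_mem _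
  have hPsplit : (∏ l ∈ Λ, (X - C l)) = X * ∏ l ∈ Λ.erase 0, (X - C l) := by
    rw [← Finset.mul_prod_erase Λ _ h0Λ, map_zero, sub_zero]
  have hstar : (-1:L) ^ n * M0 ^ q = M0 * ∏ l ∈ Λ.erase 0, (-l) := by
    have h1 : D.coeff 1 = (-1:L) ^ n * M0 ^ q := by
      have h := hcoeff 0
      simpa [hd0] using h
    have h2 : D.coeff 1 = M0 * ∏ l ∈ Λ.erase 0, (-l) := by
      rw [hDP, hPsplit, Polynomial.coeff_C_mul]
      congr 1
      rw [mul_comm X _, show (1:ℕ) = 0 + 1 from rfl, Polynomial.coeff_mul_X]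
      rw [Polynomial.coeff_zero_eq_eval_zero, Polynomial.eval_prod]
      refine Finset.prod_congr rfl fun l _ => ?_
      simp
    rw [← h1, h2]
  have hstar2 : M0 ^ q = (-1:L)^n * (M0 * ∏ l ∈ Λ.erase 0, (-l)) := by
    have hn1 : (-1:L)^n * (-1:L)^n = 1 := by
      rw [← pow_add]; exact Even.neg_one_pow ⟨n, rfl⟩
    calc M0 ^ q = ((-1:L)^n * (-1:L)^n) * M0 ^ q := by rw [hn1, one_mul]
      _ = (-1:L)^n * ((-1:L)^n * M0 ^ q) := by ring
      _ = _ := by rw [hstar]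
  have hfac : ∀ l ∈ Λ.erase 0, C (-l) * (1 - C l⁻¹ * X) = X - C l := by
    intro l hl
    have hl0 : l ≠ 0 := Finset.ne_of_mem_erase hl
    have h3 : (-l) * l⁻¹ = -1 := by
      rw [neg_mul, mul_inv_cancel₀ hl0]
    rw [mul_sub, mul_one, ← mul_assoc, ← map_mul, h3]
    simp only [map_neg, map_one]
    ring
  have hCM : C (M0 ^ q) = C ((-1:L)^n) * C M0 * ∏ l ∈ Λ.erase 0, C (-l) := by
    rw [mul_assoc, ← map_prod, ← map_mul, ← map_mul, hstar2]
  rw [hCM, hDP, hPsplit]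
  calc (C ((-1:L)^n) * C M0 * ∏ l ∈ Λ.erase 0, C (-l)) *
        (X * ∏ l ∈ Λ.erase 0, (1 - C l⁻¹ * X))
      = C ((-1:L)^n) * (C M0 * (X * ∏ l ∈ Λ.erase 0, (C (-l) * (1 - C l⁻¹ * X)))) := by
        rw [Finset.prod_mul_distrib]; ring
    _ = C ((-1:L)^n) * (C M0 * (X * ∏ l ∈ Λ.erase 0, (X - C l))) := by
        rw [Finset.prod_congr rfl hfac]
end

section
/- Let Λ be a discrete 𝔽_q-submodule of a complete nonarchimedean valued field C with |·|, and suppose λ₁, λ₂, ... is a successive minimum basis of Λ (each λᵢ has minimal absolute value among Λ minus the span of λ₁,...,λ_{i-1}). Then for any coefficients a₁,...,a_m ∈ 𝔽_q, |∑ aᵢλᵢ| = max{|λᵢ| : aᵢ ≠ 0}. -/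
/-!
Let `J` be the largest index with `aⱼ ≠ 0`. The sequence `|λᵢ|` is nondecreasing, since `λⱼ`
for `j ≥ i` is itself a candidate in the minimum defining `λᵢ`; so the ultrametric inequality
bounds `|∑ aᵢλᵢ|` by `|λ_J|`. Conversely `∑ aᵢλᵢ` lies in `Λ` but not in the span of
`λ₁, …, λ_{J-1}`, so minimality of `λ_J` gives `|λ_J| ≤ |∑ aᵢλᵢ|`.
-/

open Finset

theorem AbsoluteValue.map_smul_of_map_algebraMap {F K : Type*} [CommSemiring F] [Semiring K]
    [Algebra F K] {v : AbsoluteValue K ℝ} (htriv : ∀ c : F, c ≠ 0 → v (algebraMap F K c) = 1)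
    {c : F} (hc : c ≠ 0) (x : K) : v (c • x) = v x := by
  rw [Algebra.smul_def, v.map_mul, htriv c hc, one_mul]

theorem monotone_of_successive_min {F M α : Type*} [Semiring F] [AddCommMonoid M] [Module F M]
    [Preorder α] {Λ : Submodule F M} {l : ℕ → M} {v : M → α}
    (hmem : ∀ i, l i ∈ Λ) (hout : ∀ i : ℕ, l i ∉ Submodule.span F (l '' Set.Iio i))
    (hmin : ∀ i : ℕ, ∀ μ ∈ Λ, μ ∉ Submodule.span F (l '' Set.Iio i) → v (l i) ≤ v μ) :
    Monotone fun i => v (l i) := fun i j hij =>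
  hmin i (l j) (hmem j) fun h =>
    hout j (Submodule.span_mono (Set.image_mono (Set.Iio_subset_Iio hij)) h)

theorem sum_smul_notMem_span_Iio {F M ι : Type*} [DivisionRing F] [AddCommGroup M] [Module F M]
    {l : ℕ → M} {s : Finset ι} {e : ι → ℕ} {c : ι → F}
    {J : ι} (hJ : J ∈ s) (hcJ : c J ≠ 0) (hlt : ∀ i ∈ s, i ≠ J → e i < e J)
    (hout : l (e J) ∉ Submodule.span F (l '' Set.Iio (e J))) :
    ∑ i ∈ s, c i • l (e i) ∉ Submodule.span F (l '' Set.Iio (e J)) := by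
  classical
  have hrest : ∑ i ∈ s.erase J, c i • l (e i) ∈ Submodule.span F (l '' Set.Iio (e J)) :=
    Submodule.sum_mem _ fun i hi => Submodule.smul_mem _ _ <| Submodule.subset_span
      ⟨e i, hlt i (mem_of_mem_erase hi) (ne_of_mem_erase hi), rfl⟩
  rwa [← add_sum_erase s _ hJ, Submodule.add_mem_iff_left _ hrest,
    Submodule.smul_mem_iff _ hcJ]

theorem apply_sum_smul_of_successive_min {F K : Type*} [Field F] [Ring K] [Algebra F K]
    {Λ : Submodule F K} {l : ℕ → K} {v : AbsoluteValue K ℝ} (hna : IsNonarchimedean v)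
    (htriv : ∀ c : F, c ≠ 0 → v (algebraMap F K c) = 1)
    (hmem : ∀ i, l i ∈ Λ) (hout : ∀ i : ℕ, l i ∉ Submodule.span F (l '' Set.Iio i))
    (hmin : ∀ i : ℕ, ∀ μ ∈ Λ, μ ∉ Submodule.span F (l '' Set.Iio i) → v (l i) ≤ v μ)
    {ι : Type*} {s : Finset ι} (hs : s.Nonempty) {e : ι → ℕ} (he : Function.Injective e)
    {c : ι → F} (hc : ∀ i ∈ s, c i ≠ 0) :
    v (∑ i ∈ s, c i • l (e i)) = s.sup' hs fun i => v (l (e i)) := by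
  obtain ⟨J, hJ, hJmax⟩ := s.exists_max_image e hs
  have hmono := monotone_of_successive_min hmem hout hmin
  have hsup : (s.sup' hs fun i => v (l (e i))) = v (l (e J)) :=
    le_antisymm (sup'_le _ _ fun i hi => hmono (hJmax i hi)) (le_sup' (fun i => v (l (e i))) hJ)
  rw [hsup]
  refine le_antisymm ?_ (hmin _ _ ?_ ?_)
  · calc v (∑ i ∈ s, c i • l (e i))
        ≤ s.sup' hs fun i => v (c i • l (e i)) := hna.apply_sum_le_sup hs
      _ = s.sup' hs fun i => v (l (e i)) :=
          sup'_congr hs rfl fun i hi => v.map_smul_of_map_algebraMap htriv (hc i hi) _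
      _ = v (l (e J)) := hsup
  · exact Submodule.sum_mem _ fun i _ => Submodule.smul_mem _ _ (hmem _)
  · exact sum_smul_notMem_span_Iio hJ (hc J hJ)
      (fun i hi hiJ => (hJmax i hi).lt_of_ne (he.ne hiJ)) (hout _)

/-- Let `Λ` be a discrete `𝔽_q`-submodule of a complete nonarchimedean
valued field `Cinf` (the absolute value `v` being trivial on `𝔽_q`), and let
`λ₁, λ₂, …` be a successive minimum basis of `Λ`: each `λᵢ` lies in `Λ`, is outside the
span of the previous ones, and has minimal absolute value among the elements of `Λ`
outside that span.  Then for any coefficients `a₁,…,a_m ∈ 𝔽_q` (not all zero),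
`|∑ aᵢ λᵢ| = max {|λᵢ| : aᵢ ≠ 0}`. -/
theorem smb_orthogonal
    {F Cinf : Type*} [Field F] [DecidableEq F] [Field Cinf] [Algebra F Cinf]
    (v : AbsoluteValue Cinf ℝ)
    (hna : ∀ x y : Cinf, v (x + y) ≤ max (v x) (v y))
    (htriv : ∀ c : F, c ≠ 0 → v (algebraMap F Cinf c) = 1)
    (Λ : Submodule F Cinf)
    (l : ℕ → Cinf)
    (hmem : ∀ i, l i ∈ Λ)
    (hout : ∀ i : ℕ, l i ∉ Submodule.span F (l '' Set.Iio i))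
    (hmin : ∀ i : ℕ, ∀ μ ∈ Λ, μ ∉ Submodule.span F (l '' Set.Iio i) → v (l i) ≤ v μ)
    (m : ℕ) (a : Fin m → F) (hne : ∃ i, a i ≠ 0) :
    v (∑ i : Fin m, a i • l (i : ℕ)) =
      (Finset.univ.filter fun i : Fin m => a i ≠ 0).sup'
        (by obtain ⟨i, hi⟩ := hne; exact ⟨i, by simpa using hi⟩)
        (fun i => v (l (i : ℕ))) := by
  rw [← sum_filter_of_ne fun i _ hi => left_ne_zero_of_smul hi]
  exact apply_sum_smul_of_successive_min hna htriv hmem hout hmin _ Fin.val_injective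
    fun i hi => (mem_filter.mp hi).2
end

section
/- Let W ⊂ C be a finite 𝔽_q-subspace of a nonarchimedean valued field C of dimension d with successive minimum basis λ₁,...,λ_d, and let W₀ be spanned by λ₁,...,λ_{d₀} where |λ_{d₀}| < |λ_{d₀+1}| = ... = |λ_d| = 1. Let O be the valuation ring, and let bar denote reduction to the residue field k̄. Let W̄ = span_{𝔽_q}(λ̄_{d₀+1},...,λ̄_d) ⊆ k̄, of dimension d−d₀. Writing e_W(X) = ∑_{j=0}^d α_j(W) X^{q^j} for the polynomial X·∏'_{λ∈W}(1−X/λ) and similarly for W̄, then for all 0 ≤ j ≤ d we have |α_j(W)/α_d(W)| ≤ 1, and for d₀ ≤ j ≤ d the reduction satisfies (α_j(W)/α_d(W))‾ = (α_{j−d₀}(W̄)/α_{d−d₀}(W̄))^{q^{d₀}}. -/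
open Polynomial

section AuxLemmas

lemma flag_linearIndependent {F V : Type*} [Field F] [AddCommGroup V] [Module F V] :
    ∀ (n : ℕ) (f : Fin n → V),
      (∀ i : Fin n, f i ∉ Submodule.span F (f '' {j | j < i})) → LinearIndependent F f := by
  intro n
  induction n with
  | zero => intro f _; exact linearIndependent_empty_type
  | succ n ih =>
    intro f hf
    have hfeq : f = Fin.snoc (f ∘ Fin.castSucc) (f (Fin.last n)) := by
      funext j
      refine Fin.lastCases ?_ ?_ j <;> simp [Fin.snoc_castSucc]
    rw [hfeq]
    rw [linearIndependent_fin_snoc]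
    constructor
    · apply ih
      intro i hi
      apply hf (Fin.castSucc i)
      refine Submodule.span_mono ?_ hi
      rintro x ⟨j, hj, rfl⟩
      exact ⟨Fin.castSucc j, by simpa using hj, rfl⟩
    · have : Set.range (f ∘ Fin.castSucc) = f '' {j | j < Fin.last n} := by
        ext x
        constructor
        · rintro ⟨i, rfl⟩; exact ⟨Fin.castSucc i, Fin.castSucc_lt_last i, rfl⟩
        · rintro ⟨j, hj, rfl⟩
          have hjn : (j : ℕ) < n := hj
          exact ⟨⟨j, hjn⟩, by simp [Function.comp]⟩
      rw [this]
      exact hf (Fin.last n)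

lemma prod_one_sub_inv_eq {R : Type*} [Field R] [DecidableEq R] (S : Finset R) (h0 : (0:R) ∈ S) :
    X * ∏ lam ∈ S.erase 0, (1 - C lam⁻¹ * X)
      = C (∏ lam ∈ S.erase 0, (-lam⁻¹)) * ∏ lam ∈ S, (X - C lam) := by
  have key : ∀ a ∈ S.erase 0, (1 - C a⁻¹ * X) = C (-a⁻¹) * (X - C a) := by
    intro a ha
    have ha0 : a ≠ 0 := Finset.ne_of_mem_erase ha
    rw [mul_sub, ← map_mul]
    have h1 : (-a⁻¹) * a = -1 := by field_simp
    rw [h1]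
    simp only [map_neg, map_one, sub_neg_eq_add]
    ring
  rw [Finset.prod_congr rfl key, Finset.prod_mul_distrib,
    ← Finset.mul_prod_erase S (fun a => X - C a) h0, map_prod]
  simp only [map_zero, sub_zero]
  ring

lemma coeff_prod_X_sub_C_le {R : Type*} [Field R] [DecidableEq R] (v : AbsoluteValue R ℝ)
    (hna : ∀ x y : R, v (x + y) ≤ max (v x) (v y)) :
    ∀ (S : Finset R), (∀ a ∈ S, v a ≤ 1) → ∀ n, v ((∏ a ∈ S, (X - C a)).coeff n) ≤ 1 := by
  have hna' : ∀ x y : R, v (x - y) ≤ max (v x) (v y) := by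
    intro x y
    rw [sub_eq_add_neg]
    simpa [v.map_neg] using hna x (-y)
  intro S
  induction S using Finset.induction_on with
  | empty =>
    intro _ n
    simp only [Finset.prod_empty, coeff_one]
    split <;> simp
  | @insert a s hnotmem ih =>
    intro hb n
    rw [Finset.prod_insert hnotmem]
    have ha : v a ≤ 1 := hb a (Finset.mem_insert_self a s)
    have ihs := ih (fun x hx => hb x (Finset.mem_insert_of_mem hx))
    have expand : (X - C a) * ∏ x ∈ s, (X - C x)
        = X * ∏ x ∈ s, (X - C x) - C a * ∏ x ∈ s, (X - C x) := by ring
    rw [expand, coeff_sub, coeff_C_mul]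
    refine le_trans (hna' _ _) (max_le ?_ ?_)
    · cases n with
      | zero => simp
      | succ m => rw [coeff_X_mul]; exact ihs m
    · calc v (a * _) = v a * v _ := v.map_mul _ _
        _ ≤ 1 * 1 := mul_le_mul ha (ihs n) (v.nonneg _) zero_le_one
        _ = 1 := mul_one 1

lemma coeff_pow_char_pow {R : Type*} [CommRing R] (p : ℕ) [Fact p.Prime] [CharP R p]
    (g : R[X]) (n k : ℕ) : (g ^ p ^ n).coeff (p ^ n * k) = g.coeff k ^ p ^ n := by
  haveI : ExpChar R p := ExpChar.prime Fact.out
  rw [← map_iterateFrobenius_expand, coeff_map, mul_comm,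
    coeff_expand_mul (pow_pos (Fact.out (p := p.Prime)).pos n)]
  exact iterateFrobenius_def (R := R) ..

lemma span_finset_card {F V : Type*} [Field F] [Fintype F] [AddCommGroup V] [Module F V]
    {n : ℕ} {u : Fin n → V} (hu : LinearIndependent F u)
    {S : Finset V} (hS : (S : Set V) = (Submodule.span F (Set.range u) : Set V)) :
    S.card = Fintype.card F ^ n := by
  haveI : FiniteDimensional F (Submodule.span F (Set.range u)) :=
    FiniteDimensional.span_of_finite F (Set.finite_range u)
  haveI : Finite (Submodule.span F (Set.range u)) := Module.finite_of_finite F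
  haveI := Fintype.ofFinite (Submodule.span F (Set.range u))
  have h1 : S.card = (S : Set V).ncard := (Set.ncard_coe_finset S).symm
  rw [h1, hS]
  have h2 : (Submodule.span F (Set.range u) : Set V).ncard
      = Nat.card (Submodule.span F (Set.range u)) := rfl
  rw [h2, Nat.card_eq_fintype_card, Module.card_eq_pow_finrank (K := F), finrank_span_eq_card hu,
    Fintype.card_fin]

end AuxLemmas

/-- Lemma 4.9 of the paper.  Let `W ⊂ Cinf` be a finite `𝔽_q`-subspace
of dimension `d` with successive minimum basis `l 0, …, l (d-1)` (zero-based; the paper's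
`λ_i` is `l (i-1)`), where `|l i| < 1` for `i < d₀` and `|l i| = 1` for `d₀ ≤ i < d`.
Let `O = {x : |x| ≤ 1}` be the valuation ring, `π : O →+* K` the reduction to the residue
field (its kernel being `{|x| < 1}`), and `W̄ ⊂ K` the image of `W` under reduction
(the span of the reductions of `l d₀, …, l (d-1)`).  Writing
`e_W(X) = X·∏'_{λ∈W}(1−X/λ) = ∑_j α_j X^{q^j}` and similarly `e_{W̄} = ∑_j β_j X^{q^j}`,
then `|α_j/α_d| ≤ 1` for all `0 ≤ j ≤ d`, and for `d₀ ≤ j ≤ d` the reduction of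
`α_j/α_d` equals `(β_{j−d₀}/β_{d−d₀})^{q^{d₀}}`. -/
theorem reduction_of_exponential_coefficients
    {F Cinf K : Type*} [Field F] [Fintype F] [Field Cinf] [Algebra F Cinf] [Field K]
    [DecidableEq Cinf] [DecidableEq K]
    (q : ℕ) (hq : Fintype.card F = q)
    (v : AbsoluteValue Cinf ℝ)
    (hna : ∀ x y : Cinf, v (x + y) ≤ max (v x) (v y))
    (htriv : ∀ c : F, c ≠ 0 → v (algebraMap F Cinf c) = 1)
    (O : Subring Cinf) (hO : ∀ x : Cinf, x ∈ O ↔ v x ≤ 1)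
    (π : O →+* K) (hπker : ∀ x : O, π x = 0 ↔ v (x : Cinf) < 1)
    (hπsurj : Function.Surjective π)
    (d d₀ : ℕ) (hd₀ : d₀ ≤ d)
    (W : Finset Cinf) (l : Fin d → Cinf)
    (hWspan : (W : Set Cinf) = (Submodule.span F (Set.range l) : Set Cinf))
    (hSMB : ∀ i : Fin d,
      l i ∉ Submodule.span F (l '' {j | j < i}) ∧
      ∀ μ ∈ Submodule.span F (Set.range l),
        μ ∉ Submodule.span F (l '' {j | j < i}) → v (l i) ≤ v μ)
    (hlt : ∀ i : Fin d, (i : ℕ) < d₀ → v (l i) < 1)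
    (hone : ∀ i : Fin d, d₀ ≤ (i : ℕ) → v (l i) = 1)
    (Wbar : Finset K)
    (hWbar : ∀ y : K, y ∈ Wbar ↔ ∃ x : O, (x : Cinf) ∈ W ∧ π x = y)
    (α : ℕ → Cinf)
    (hα : ∀ j, α j = (X * ∏ lam ∈ W.erase 0, (1 - C lam⁻¹ * X)).coeff (q ^ j))
    (β : ℕ → K)
    (hβ : ∀ j, β j = (X * ∏ mu ∈ Wbar.erase 0, (1 - C mu⁻¹ * X)).coeff (q ^ j)) :
    (∀ j ≤ d, v (α j / α d) ≤ 1) ∧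
    (∀ j, d₀ ≤ j → j ≤ d → ∀ h : α j / α d ∈ O,
      π ⟨α j / α d, h⟩ = (β (j - d₀) / β (d - d₀)) ^ q ^ d₀) := by
  classical
  -- the span as a submodule
  set Wsp : Submodule F Cinf := Submodule.span F (Set.range l) with hWsp
  have hmemW : ∀ x : Cinf, x ∈ W ↔ x ∈ Wsp := by
    intro x
    rw [← Finset.mem_coe, hWspan, SetLike.mem_coe]
  -- smul bound
  have hsmul : ∀ (c : F) (x : Cinf), v (c • x) ≤ v x := by
    intro c x
    rw [Algebra.smul_def, v.map_mul]
    rcases eq_or_ne c 0 with rfl | hc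
    · simp [v.nonneg]
    · rw [htriv c hc, one_mul]
  -- all elements of W have absolute value ≤ 1
  have hvle : ∀ i : Fin d, v (l i) ≤ 1 := by
    intro i
    rcases lt_or_ge (i : ℕ) d₀ with h | h
    · exact (hlt i h).le
    · exact (hone i h).le
  have hWle : ∀ x ∈ Wsp, v x ≤ 1 := by
    intro x hx
    let Ole : Submodule F Cinf :=
      { carrier := {x | v x ≤ 1}
        add_mem' := fun hx hy => le_trans (hna _ _) (max_le hx hy)
        zero_mem' := by simp
        smul_mem' := fun c x hx => le_trans (hsmul c x) hx }
    have : Wsp ≤ Ole := Submodule.span_le.mpr (by rintro _ ⟨i, rfl⟩; exact hvle i)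
    exact this hx
  have hWv : ∀ lam ∈ W, v lam ≤ 1 := fun lam hl => hWle lam ((hmemW lam).mp hl)
  -- linear independence and cardinality
  have hli : LinearIndependent F l := flag_linearIndependent d l (fun i => (hSMB i).1)
  have hcardW : W.card = q ^ d := by
    rw [← hq]
    exact span_finset_card hli hWspan
  have h0W : (0 : Cinf) ∈ W := (hmemW 0).mpr (zero_mem _)
  -- the normalized polynomial over Cinf
  set a : Cinf := ∏ lam ∈ W.erase 0, (-lam⁻¹) with ha_def
  set f : Cinf[X] := ∏ lam ∈ W, (X - C lam) with hf_def
  have hprod : X * ∏ lam ∈ W.erase 0, (1 - C lam⁻¹ * X) = C a * f :=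
    prod_one_sub_inv_eq W h0W
  have hαa : ∀ j, α j = a * f.coeff (q ^ j) := by
    intro j; rw [hα j, hprod, coeff_C_mul]
  have hfmonic : f.Monic := monic_prod_of_monic _ _ (fun lam _ => monic_X_sub_C lam)
  have hfdeg : f.natDegree = q ^ d := by
    rw [hf_def, natDegree_prod _ _ (fun lam _ => X_sub_C_ne_zero lam)]
    simp [natDegree_X_sub_C, hcardW]
  have hfd : f.coeff (q ^ d) = 1 := by rw [← hfdeg]; exact hfmonic.coeff_natDegree
  have ha0 : a ≠ 0 := by
    rw [ha_def]
    apply Finset.prod_ne_zero_iff.mpr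
    intro lam hlam
    have : lam ≠ 0 := Finset.ne_of_mem_erase hlam
    simp [this]
  have hαd : α d = a := by rw [hαa, hfd, mul_one]
  have hratio : ∀ j, α j / α d = f.coeff (q ^ j) := by
    intro j
    rw [hαa, hαd, mul_comm, mul_div_assoc, div_self ha0, mul_one]
  refine ⟨?_, ?_⟩
  · intro j _
    rw [hratio]
    exact coeff_prod_X_sub_C_le v hna W hWv _
  -- part 2
  intro j hjd₀ hjd hmem
  -- characteristic
  set p : ℕ := ringChar F with hp_def
  haveI : CharP F p := ringChar.charP F
  obtain ⟨m, hp, hcard⟩ := FiniteField.card F p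
  have hqpm : q = p ^ (m : ℕ) := by rw [← hq, hcard]
  haveI : CharP Cinf p := charP_of_injective_algebraMap (algebraMap F Cinf).injective p
  haveI : CharP O p := CharP.subring Cinf p O
  have hπp : ((p : ℕ) : K) = 0 := by
    have h1 : ((p : ℕ) : O) = 0 := CharP.cast_eq_zero O p
    rw [← map_natCast π p, h1, map_zero]
  have hrK : ringChar K = p := by
    rcases hp.eq_one_or_self_of_dvd _ (ringChar.dvd hπp) with h1 | h2
    · exact absurd h1 CharP.ringChar_ne_one
    · exact h2
  haveI : CharP K p := hrK ▸ ringChar.charP K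
  haveI : Fact p.Prime := ⟨hp⟩
  -- the lifted finset in O
  have hWO : ∀ x : Cinf, x ∈ W → x ∈ O := fun x hx => (hO x).mpr (hWv x hx)
  set Wo : Finset O := W.attach.map
    ⟨fun x => (⟨x.1, hWO x.1 x.2⟩ : O),
      fun x y hxy => by simp only [Subtype.mk.injEq] at hxy; exact Subtype.ext hxy⟩ with hWo_def
  have hWomem : ∀ x : O, x ∈ Wo ↔ (x : Cinf) ∈ W := by
    intro x
    simp only [hWo_def, Finset.mem_map, Finset.mem_attach, Function.Embedding.coeFn_mk, true_and]
    constructor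
    · rintro ⟨y, hy⟩; rw [← hy]; exact y.2
    · intro hx; exact ⟨⟨(x : Cinf), hx⟩, Subtype.ext rfl⟩
  set fo : Polynomial O := ∏ x ∈ Wo, (X - C x) with hfo_def
  have hmap1 : fo.map O.subtype = f := by
    rw [hfo_def, Polynomial.map_prod]
    simp only [Polynomial.map_sub, map_X, map_C]
    rw [hWo_def, Finset.prod_map]
    simp only [Function.Embedding.coeFn_mk, Subring.coe_subtype]
    rw [hf_def]
    exact Finset.prod_attach W (fun lam => X - C lam)
  have hcoeff : ∀ n, ((fo.coeff n : O) : Cinf) = f.coeff n := by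
    intro n; rw [← hmap1, coeff_map]; rfl
  -- fibers of the reduction map
  set T : K → Finset O := fun μ => Wo.filter (fun x => π x = μ) with hT_def
  have hmapsto : ∀ x ∈ Wo, π x ∈ Wbar := fun x hx => (hWbar _).mpr ⟨x, (hWomem x).mp hx, rfl⟩
  -- the small subspace
  set u : Fin d₀ → Cinf := l ∘ Fin.castLE hd₀ with hu_def
  have hui : LinearIndependent F u := hli.comp _ (Fin.castLE_injective hd₀)
  set W0 : Submodule F Cinf := Submodule.span F (Set.range u) with hW0_def
  have hW0eq : ∀ x : Cinf, (x ∈ Wsp ∧ v x < 1) ↔ x ∈ W0 := by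
    intro x
    constructor
    · rintro ⟨hxW, hxv⟩
      by_contra hns
      rcases lt_or_eq_of_le hd₀ with hdd | hdd
      · set i : Fin d := ⟨d₀, hdd⟩ with hi_def
        have himg : l '' {j' | j' < i} = Set.range u := by
          ext y
          constructor
          · rintro ⟨jj, hjj, rfl⟩
            have hjjd : (jj : ℕ) < d₀ := hjj
            refine ⟨⟨(jj : ℕ), hjjd⟩, ?_⟩
            exact congrArg l (Fin.ext rfl)
          · rintro ⟨k, rfl⟩
            exact ⟨Fin.castLE hd₀ k, (show ((k : ℕ) : ℕ) < d₀ from k.2), rfl⟩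
        have hvlt := (hSMB i).2 x hxW (by rw [himg]; exact hns)
        rw [hone i (le_refl d₀)] at hvlt
        exact absurd (lt_of_le_of_lt hvlt hxv) (lt_irrefl 1)
      · apply hns
        have hru : Set.range u = Set.range l := by
          ext y; constructor
          · rintro ⟨k, rfl⟩; exact ⟨_, rfl⟩
          · rintro ⟨i, rfl⟩
            refine ⟨⟨(i : ℕ), hdd ▸ i.2⟩, ?_⟩
            exact congrArg l (Fin.ext rfl)
        rw [hW0_def, hru]
        exact hxW
    · intro hx
      constructor
      · exact Submodule.span_le.mpr
          (by rintro _ ⟨k, rfl⟩; exact Submodule.subset_span ⟨_, rfl⟩) hx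
      · let Olt : Submodule F Cinf :=
          { carrier := {x | v x < 1}
            add_mem' := fun hx hy => lt_of_le_of_lt (hna _ _) (max_lt hx hy)
            zero_mem' := by simp
            smul_mem' := fun c x hx => lt_of_le_of_lt (hsmul c x) hx }
        have hle : W0 ≤ Olt := Submodule.span_le.mpr
          (by rintro _ ⟨k, rfl⟩; exact hlt _ k.2)
        exact hle hx
  -- cardinality of the zero fiber
  have hTCset : (((T 0).image (fun x : O => (x : Cinf)) : Finset Cinf) : Set Cinf)
      = (W0 : Set Cinf) := by
    ext x
    simp only [Finset.coe_image, Set.mem_image, Finset.mem_coe, hT_def, Finset.mem_filter,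
      SetLike.mem_coe]
    constructor
    · rintro ⟨y, ⟨hyWo, hyπ⟩, rfl⟩
      exact (hW0eq _).mp ⟨(hmemW _).mp ((hWomem y).mp hyWo), (hπker y).mp hyπ⟩
    · intro hx
      obtain ⟨hxW, hxv⟩ := (hW0eq x).mpr hx
      refine ⟨⟨x, (hO x).mpr hxv.le⟩,
        ⟨(hWomem _).mpr ((hmemW x).mpr hxW), (hπker _).mpr hxv⟩, rfl⟩
  have hT0card : (T 0).card = q ^ d₀ := by
    rw [← Finset.card_image_of_injective (T 0) Subtype.val_injective, ← hq]
    exact span_finset_card hui hTCset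
  -- all fibers over Wbar have the same cardinality
  have hTμcard : ∀ μ ∈ Wbar, (T μ).card = q ^ d₀ := by
    intro μ hμ
    obtain ⟨x₀, hx₀W, hx₀π⟩ := (hWbar μ).mp hμ
    rw [← hT0card]
    apply Finset.card_bij (fun (x : O) _ => x - x₀)
    · intro x hx
      simp only [hT_def, Finset.mem_filter] at hx ⊢
      obtain ⟨hxWo, hxπ⟩ := hx
      refine ⟨?_, by rw [map_sub, hxπ, hx₀π, sub_self]⟩
      rw [hWomem]
      push_cast
      exact (hmemW _).mpr (sub_mem ((hmemW _).mp ((hWomem x).mp hxWo)) ((hmemW _).mp hx₀W))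
    · intro x _ y _ hxy; exact sub_left_inj.mp hxy
    · intro bb hb
      refine ⟨bb + x₀, ?_, by ring⟩
      simp only [hT_def, Finset.mem_filter] at hb ⊢
      obtain ⟨hbWo, hbπ⟩ := hb
      refine ⟨?_, by rw [map_add, hbπ, hx₀π, zero_add]⟩
      rw [hWomem]
      push_cast
      exact (hmemW _).mpr (add_mem ((hmemW _).mp ((hWomem bb).mp hbWo)) ((hmemW _).mp hx₀W))
  -- cardinality of Wbar
  have h0Wbar : (0 : K) ∈ Wbar := (hWbar 0).mpr ⟨0, by simpa using h0W, map_zero π⟩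
  have hcardWo : Wo.card = q ^ d := by rw [hWo_def, Finset.card_map, Finset.card_attach, hcardW]
  have hqpos : 0 < q ^ d₀ := pow_pos (by rw [← hq]; exact Fintype.card_pos) d₀
  have hcardWbar : Wbar.card = q ^ (d - d₀) := by
    have hsum := Finset.card_eq_sum_card_fiberwise hmapsto
    rw [Finset.sum_congr rfl (fun μ hμ => hTμcard μ hμ), Finset.sum_const, smul_eq_mul,
      hcardWo] at hsum
    have hsplit : q ^ d = q ^ (d - d₀) * q ^ d₀ := by rw [← pow_add]; congr 1; omega
    rw [hsplit] at hsum
    exact (Nat.eq_of_mul_eq_mul_right hqpos hsum).symm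
  -- the normalized polynomial over K
  set b : K := ∏ mu ∈ Wbar.erase 0, (-mu⁻¹) with hb_def
  set g : K[X] := ∏ mu ∈ Wbar, (X - C mu) with hg_def
  have hprodK : X * ∏ mu ∈ Wbar.erase 0, (1 - C mu⁻¹ * X) = C b * g :=
    prod_one_sub_inv_eq Wbar h0Wbar
  have hβb : ∀ j', β j' = b * g.coeff (q ^ j') := fun j' => by rw [hβ j', hprodK, coeff_C_mul]
  have hgmonic : g.Monic := monic_prod_of_monic _ _ (fun mu _ => monic_X_sub_C mu)
  have hgdeg : g.natDegree = q ^ (d - d₀) := by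
    rw [hg_def, natDegree_prod _ _ (fun mu _ => X_sub_C_ne_zero mu)]
    simp [natDegree_X_sub_C, hcardWbar]
  have hb0 : b ≠ 0 := by
    rw [hb_def]
    apply Finset.prod_ne_zero_iff.mpr
    intro mu hmu
    have : mu ≠ 0 := Finset.ne_of_mem_erase hmu
    simp [this]
  have hβd : β (d - d₀) = b := by
    rw [hβb, ← hgdeg, hgmonic.coeff_natDegree, mul_one]
  have hβratio : β (j - d₀) / β (d - d₀) = g.coeff (q ^ (j - d₀)) := by
    rw [hβb, hβd, mul_comm, mul_div_assoc, div_self hb0, mul_one]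
  -- the reduced polynomial is a power of g
  have hmapπ : fo.map π = g ^ q ^ d₀ := by
    rw [hfo_def, Polynomial.map_prod]
    simp only [Polynomial.map_sub, map_X, map_C]
    rw [← Finset.prod_fiberwise_of_maps_to hmapsto (fun x => X - C (π x)), hg_def,
      ← Finset.prod_pow]
    apply Finset.prod_congr rfl
    intro μ hμ
    have hconst : ∀ x ∈ Wo.filter (fun x => π x = μ), (X - C (π x)) = X - C μ := by
      intro x hx; rw [(Finset.mem_filter.mp hx).2]
    rw [Finset.prod_congr rfl hconst, Finset.prod_const]
    congr 1
    exact hTμcard μ hμ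
  -- conclusion
  have hcoeffval : α j / α d = ((fo.coeff (q ^ j) : O) : Cinf) := by rw [hratio, hcoeff]
  have hsub : (⟨α j / α d, hmem⟩ : O) = fo.coeff (q ^ j) := Subtype.ext hcoeffval
  rw [hsub, show π (fo.coeff (q ^ j)) = (fo.map π).coeff (q ^ j) from (coeff_map π _).symm,
    hmapπ]
  have hqd₀ : q ^ d₀ = p ^ ((m : ℕ) * d₀) := by rw [hqpm, ← pow_mul]
  have hqj : q ^ j = p ^ ((m : ℕ) * d₀) * q ^ (j - d₀) := by
    rw [← hqd₀, ← pow_add]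
    congr 1
    omega
  rw [hqj, hqd₀, coeff_pow_char_pow p g ((m : ℕ) * d₀) (q ^ (j - d₀)), ← hqd₀, hβratio]
end

section
/- Let Λ be an 𝔽_q-lattice in C with e_Λ(X) = ∑_{i≥0} α_i(Λ) X^{q^i}. If α_k(Λ) = 0 for some k ≥ 1, then Λ is k-inseparable, i.e., for a successive minimum basis λ₁, λ₂, ... of Λ one has |λ_k| = |λ_{k+1}|. -/
/-!
Suppose `|λ_k| < |λ_{k+1}|` and let `W` be the span of `λ_1, …, λ_k`, a subspace with
`q^k` elements. The coefficient `α_k` is the elementary symmetric sum of degree `q^k - 1` in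
the `-1/λ`, `λ ∈ Λ ∖ 0`. Elements of `W` have absolute value at most `|λ_k|` and elements of
`Λ ∖ W` at least `|λ_{k+1}|`, so among the `(q^k - 1)`-subsets of `Λ ∖ 0` the subset `W ∖ 0`
alone gives a term of largest absolute value. By the ultrametric inequality the whole sum then
has the absolute value of that term, so `α_k ≠ 0`.
-/

open Polynomial

section

open Finset

theorem Finset.prod_lt_prod_of_card_eq_of_separated {ι R : Type*} [CommSemiring R]
    [LinearOrder R] [IsStrictOrderedRing R] {S T₀ T : Finset ι} {w : ι → R} {a b : R}
    (hw : ∀ i ∈ S, 0 < w i) (hT₀ : T₀ ⊆ S) (hT : T ⊆ S) (hcard : #T = #T₀) (hne : T ≠ T₀)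
    (hab : a < b) (hlow : ∀ i ∈ T₀, w i ≤ a) (hhigh : ∀ i ∈ S, i ∉ T₀ → b ≤ w i) :
    ∏ i ∈ T₀, w i < ∏ i ∈ T, w i := by
  classical
  have hnew : (T \ T₀).Nonempty :=
    sdiff_nonempty.2 fun h => hne (eq_of_subset_of_card_le h hcard.ge)
  have hdiff : #(T₀ \ T) = #(T \ T₀) := card_sdiff_comm hcard.symm
  obtain ⟨x, hx⟩ : (T₀ \ T).Nonempty := card_pos.1 (hdiff ▸ hnew.card_pos)
  have ha : 0 ≤ a := (hw x (hT₀ (mem_sdiff.1 hx).1)).le.trans (hlow x (mem_sdiff.1 hx).1)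
  have hinter : 0 < ∏ i ∈ T₀ ∩ T, w i :=
    prod_pos fun i hi => hw i (hT₀ (mem_inter.1 hi).1)
  rw [← prod_inter_mul_prod_sdiff T₀ T, ← prod_inter_mul_prod_sdiff T T₀, inter_comm T]
  refine mul_lt_mul_of_pos_left ?_ hinter
  calc ∏ i ∈ T₀ \ T, w i ≤ a ^ #(T₀ \ T) := by
        rw [← prod_const]
        exact prod_le_prod (fun i hi => (hw i (hT₀ (mem_sdiff.1 hi).1)).le)
          fun i hi => hlow i (mem_sdiff.1 hi).1
    _ < b ^ #(T \ T₀) := hdiff ▸ pow_lt_pow_left₀ hab ha (card_ne_zero.2 ⟨x, hx⟩)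
    _ ≤ ∏ i ∈ T \ T₀, w i := by
        rw [← prod_const]
        exact prod_le_prod (fun _ _ => ha.trans hab.le)
          fun i hi => hhigh i (hT (mem_sdiff.1 hi).1) (mem_sdiff.1 hi).2

theorem Finset.card_filter_mem_of_subset {α : Type*} {S : Finset α} {t : Set α}
    [DecidablePred (· ∈ t)] (h : t ⊆ S) : #(S.filter (· ∈ t)) = Nat.card t := by
  rw [← Nat.card_eq_finsetCard]
  congr
  ext x
  simpa using fun hx => h hx

theorem Polynomial.coeff_prod_one_add_C_mul_X {ι R : Type*} [CommSemiring R] (s : Finset ι)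
    (r : ι → R) (k : ℕ) :
    (∏ i ∈ s, (1 + C (r i) * X)).coeff k = ∑ t ∈ s.powersetCard k, ∏ i ∈ t, r i := by
  classical
  simp_rw [prod_one_add, prod_mul_distrib, ← map_prod, prod_const, finsetSum_coeff,
    coeff_C_mul_X_pow, powersetCard_eq_filter, sum_filter, eq_comm (a := k)]

theorem coeff_X_mul_prod_one_sub_C_inv_mul_X_ne_zero {K : Type*} [Field K] [DecidableEq K]
    {v : AbsoluteValue K ℝ} (hna : IsNonarchimedean v) {S W : Finset K} (hWS : W ⊆ S)
    (hW0 : 0 ∈ W) {a b : ℝ} (hab : a < b) (hlow : ∀ x ∈ W, v x ≤ a)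
    (hhigh : ∀ y ∈ S, y ∉ W → b ≤ v y) :
    (X * ∏ x ∈ S.erase 0, (1 - C x⁻¹ * X)).coeff #W ≠ 0 := by
  have hprod : ∀ T : Finset K, v (∏ x ∈ T, -x⁻¹) = (∏ x ∈ T, v x)⁻¹ := fun T => by
    simp only [map_prod, AbsoluteValue.map_neg, map_inv₀, prod_inv_distrib]
  have hpos : ∀ x ∈ S.erase 0, 0 < v x := fun x hx => v.pos (ne_of_mem_erase hx)
  have hT₀ : W.erase 0 ⊆ S.erase 0 := erase_subset_erase 0 hWS
  have hT₀pos : 0 < ∏ x ∈ W.erase 0, v x := prod_pos fun x hx => hpos x (hT₀ hx)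
  have hdom : ∀ T ∈ (S.erase 0).powersetCard #(W.erase 0), T ≠ W.erase 0 →
      v (∏ x ∈ T, -x⁻¹) < v (∏ x ∈ W.erase 0, -x⁻¹) := by
    intro T hT hne
    obtain ⟨hTS, hcard⟩ := mem_powersetCard.1 hT
    rw [hprod, hprod]
    refine inv_strictAnti₀ hT₀pos (prod_lt_prod_of_card_eq_of_separated hpos hT₀ hTS hcard hne
      hab (fun x hx => hlow x (mem_of_mem_erase hx)) fun y hy hyW => ?_)
    exact hhigh y (mem_of_mem_erase hy) fun h => hyW (mem_erase.2 ⟨ne_of_mem_erase hy, h⟩)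
  have hsum := hna.apply_sum_eq_of_lt (fun x => (v.map_neg x).symm)
    (mem_powersetCard.2 ⟨hT₀, rfl⟩) hdom
  simp_rw [sub_eq_add_neg, ← neg_mul, ← map_neg C]
  rw [← card_erase_add_one hW0, coeff_X_mul, coeff_prod_one_add_C_mul_X]
  intro h
  rw [h, map_zero, hprod] at hsum
  exact (inv_pos.2 hT₀pos).ne' hsum.symm

theorem linearIndepOn_of_forall_notMem_span_image_Iio {ι K V : Type*} [LinearOrder ι]
    [Field K] [AddCommGroup V] [Module K V] {f : ι → V}
    (hf : ∀ i, f i ∉ Submodule.span K (f '' Set.Iio i)) (s : Finset ι) : LinearIndepOn K f s := by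
  classical
  induction s using induction_on_max with
  | empty => simp
  | insert a s hlt ih =>
    rw [coe_insert]
    exact ih.insert fun h => hf a (Submodule.span_mono (Set.image_mono fun x hx => hlt x hx) h)

theorem AbsoluteValue.apply_le_of_mem_span {F K : Type*} [Field F] [Field K] [Algebra F K]
    {v : AbsoluteValue K ℝ} (hna : IsNonarchimedean v)
    (hF : ∀ c : F, v (algebraMap F K c) ≤ 1) {s : Set K} {a : ℝ} (ha : 0 ≤ a)
    (hs : ∀ x ∈ s, v x ≤ a) {μ : K} (hμ : μ ∈ Submodule.span F s) : v μ ≤ a := by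
  induction hμ using Submodule.span_induction with
  | mem x hx => exact hs x hx
  | zero => simpa using ha
  | add x y _ _ hx hy => exact (hna x y).trans (max_le hx hy)
  | smul c x _ hx =>
    rw [Algebra.smul_def, map_mul]
    exact (mul_le_of_le_one_left (v.nonneg x) (hF c)).trans hx

section SuccessiveMinima

variable (F : Type*) {K : Type*} [Field F] [Field K] [Algebra F K]

-- Indices are zero-based: `l i` is the paper's `λ_{i+1}`.
def IsSuccessiveMinimumBasis (v : AbsoluteValue K ℝ) {n : ℕ} (l : Fin n → K) : Prop :=
  ∀ i, l i ∉ Submodule.span F (l '' Set.Iio i) ∧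
    ∀ μ ∈ Submodule.span F (Set.range l),
      μ ∉ Submodule.span F (l '' Set.Iio i) → v (l i) ≤ v μ

namespace IsSuccessiveMinimumBasis

variable {F} {v : AbsoluteValue K ℝ} {n : ℕ} {l : Fin n → K}

theorem monotone (hl : IsSuccessiveMinimumBasis F v l) : Monotone fun i => v (l i) :=
  fun i j hij => (hl i).2 (l j) (Submodule.subset_span ⟨j, rfl⟩) fun h =>
    (hl j).1 (Submodule.span_mono (Set.image_mono fun _ hm => lt_of_lt_of_le hm hij) h)

theorem natCard_span_image_Iio [Finite F] (hl : IsSuccessiveMinimumBasis F v l) (i : Fin n) :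
    Nat.card (Submodule.span F (l '' Set.Iio i)) = Nat.card F ^ (i : ℕ) := by
  have := Module.Finite.span_of_finite F ((Set.finite_Iio i).image l)
  have hli : LinearIndepOn F l (Set.Iio i) := by
    simpa using linearIndepOn_of_forall_notMem_span_image_Iio (fun j => (hl j).1) (Iio i)
  rw [Module.natCard_eq_pow_finrank (K := F), Set.image_eq_range, finrank_span_eq_card hli]
  simp

end IsSuccessiveMinimumBasis

end SuccessiveMinima

end

/-- first half of the spectral principle.  Let `Λ` be an `𝔽_q`-lattice
in a nonarchimedean valued field (a finite-dimensional `𝔽_q`-subspace of dimension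
`n > k` suffices), with exponential `e_Λ(X) = X·∏'_{λ∈Λ}(1−X/λ) = ∑ α_i X^{q^i}`.
If `α_k(Λ) = 0` for some `k ≥ 1`, then `Λ` is `k`-inseparable: a successive minimum
basis `l 0, l 1, …` (zero-based; the paper's `λ_i` is `l (i-1)`) satisfies
`|λ_k| = |λ_{k+1}|`, i.e. `v (l (k-1)) = v (l k)`. -/
theorem alpha_k_zero_implies_k_inseparable
    {F Cinf : Type*} [Field F] [Fintype F] [Field Cinf] [Algebra F Cinf] [DecidableEq Cinf]
    (q : ℕ) (hq : Fintype.card F = q)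
    (v : AbsoluteValue Cinf ℝ)
    (hna : ∀ x y : Cinf, v (x + y) ≤ max (v x) (v y))
    (htriv : ∀ c : F, c ≠ 0 → v (algebraMap F Cinf c) = 1)
    (n k : ℕ) (hkn : k < n)
    (S : Finset Cinf) (l : Fin n → Cinf)
    (hSspan : (S : Set Cinf) = (Submodule.span F (Set.range l) : Set Cinf))
    (hSMB : ∀ i : Fin n,
      l i ∉ Submodule.span F (l '' {j | j < i}) ∧
      ∀ μ ∈ Submodule.span F (Set.range l),
        μ ∉ Submodule.span F (l '' {j | j < i}) → v (l i) ≤ v μ)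
    (hzero : (X * ∏ lam ∈ S.erase 0, (1 - C lam⁻¹ * X)).coeff (q ^ k) = 0) :
    v (l ⟨k - 1, by omega⟩) = v (l ⟨k, by omega⟩) := by
  classical
  have hl : IsSuccessiveMinimumBasis F v l := hSMB
  set W := Submodule.span F (l '' Set.Iio ⟨k, hkn⟩)
  have hWS : (W : Set Cinf) ⊆ S :=
    hSspan ▸ Submodule.span_mono (Set.image_subset_range _ _)
  have hcard : (S.filter (· ∈ (W : Set Cinf))).card = q ^ k := by
    rw [Finset.card_filter_mem_of_subset hWS, ← hq, ← Nat.card_eq_fintype_card]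
    exact hl.natCard_span_image_Iio ⟨k, hkn⟩
  have hF : ∀ c : F, v (algebraMap F Cinf c) ≤ 1 := fun c => by
    rcases eq_or_ne c 0 with rfl | hc
    · simp
    · exact (htriv c hc).le
  refine (hl.monotone (Fin.mk_le_mk.2 (Nat.sub_le k 1))).eq_of_not_lt fun hlt => ?_
  refine coeff_X_mul_prod_one_sub_C_inv_mul_X_ne_zero hna (Finset.filter_subset _ S)
    (Finset.mem_filter.2 ⟨hWS W.zero_mem, W.zero_mem⟩) hlt (fun x hx => ?_) (fun y hy hyW => ?_)
    (hcard ▸ hzero)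
  · refine AbsoluteValue.apply_le_of_mem_span hna hF (v.nonneg _) ?_ (Finset.mem_filter.1 hx).2
    rintro _ ⟨j, hj, rfl⟩
    exact hl.monotone (Fin.mk_le_mk.2 (Nat.le_sub_one_of_lt hj))
  · exact (hl _).2 y (SetLike.mem_coe.1 (hSspan ▸ hy)) fun hyW' =>
      hyW (Finset.mem_filter.2 ⟨hy, hyW'⟩)
end

section
/- Let q ≥ 2, r ≥ 1, d ≥ 1, and write k = k₀ + s·r with 0 ≤ k₀ < r, 0 ≤ s ≤ d, 1 ≤ k ≤ rd. Define m_j := (⌈j/r⌉ − 1) − d, so that m_j = t − d when rt < j ≤ r(t+1). Then d − ∑_{j=1}^{k} (q^j − q^{j-1})·m_j = (d−s)·q^k + q^r·(q^{rs} − 1)/(q^r − 1). -/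
private lemma aux_sum (q r d : ℕ) (hq : 2 ≤ q) (hr : 1 ≤ r) (k : ℕ) (hk : 1 ≤ k) :
    (d : ℚ) - ∑ j ∈ Finset.Icc 1 k,
        ((q : ℚ) ^ j - (q : ℚ) ^ (j - 1)) * ((((j - 1) / r : ℕ) : ℚ) - (d : ℚ)) =
      ((d : ℚ) - ((k / r : ℕ) : ℚ)) * (q : ℚ) ^ k +
        (q : ℚ) ^ r * (((q : ℚ) ^ (r * (k / r)) - 1) / ((q : ℚ) ^ r - 1)) := by
  have hq1 : (q : ℚ) - 1 ≠ 0 := by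
    have : (2 : ℚ) ≤ (q : ℚ) := by exact_mod_cast hq
    intro h; nlinarith
  have hx : (q : ℚ) ^ r - 1 ≠ 0 := by
    have h2 : (1 : ℚ) < (q : ℚ) := by exact_mod_cast (by omega : 1 < q)
    have := one_lt_pow₀ h2 (by omega : r ≠ 0)
    intro h; nlinarith
  induction k, hk using Nat.le_induction with
  | base =>
      rcases Nat.eq_or_lt_of_le hr with h | h
      · subst h
        simp only [Finset.Icc_self, Finset.sum_singleton, Nat.sub_self, Nat.zero_div,
          Nat.cast_zero, pow_one, pow_zero, Nat.cast_one, Nat.div_one, mul_one,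
          Nat.cast_ofNat]
        field_simp
        ring
      · have h1 : 1 / r = 0 := Nat.div_eq_of_lt h
        simp only [Finset.Icc_self, Finset.sum_singleton, Nat.sub_self, Nat.zero_div,
          Nat.cast_zero, pow_one, pow_zero, h1, Nat.mul_zero, mul_zero]
        field_simp
        ring
  | succ k hk ih =>
      rw [Finset.sum_Icc_succ_top (by omega : 1 ≤ k + 1)]
      simp only [Nat.add_sub_cancel]
      by_cases hdvd : r ∣ (k + 1)
      · have h1 : (k + 1) / r = k / r + 1 := by rw [Nat.succ_div, if_pos hdvd]
        have h2 : r * ((k + 1) / r) = k + 1 := Nat.mul_div_cancel' hdvd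
        have ha : r * (k / r) + r = k + 1 := by
          rw [h1, Nat.mul_add, mul_one] at h2; exact h2
        have h3 : r * (k / r + 1) = k + 1 := by rw [Nat.mul_add, mul_one]; omega
        rw [h1, h3]
        have hrw : (q : ℚ) ^ (k + 1) = (q : ℚ) ^ (r * (k / r)) * (q : ℚ) ^ r := by
          rw [← pow_add, ha]
        rw [hrw]
        have hS : (∑ j ∈ Finset.Icc 1 k,
            ((q : ℚ) ^ j - (q : ℚ) ^ (j - 1)) * ((((j - 1) / r : ℕ) : ℚ) - (d : ℚ)))
            = (d : ℚ) - (((d : ℚ) - ((k / r : ℕ) : ℚ)) * (q : ℚ) ^ k +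
              (q : ℚ) ^ r * (((q : ℚ) ^ (r * (k / r)) - 1) / ((q : ℚ) ^ r - 1))) := by
          linarith [ih]
        rw [hS]
        push_cast
        field_simp
        ring
      · have h1 : (k + 1) / r = k / r := by simp [Nat.succ_div, hdvd]
        rw [h1]
        have hS : (∑ j ∈ Finset.Icc 1 k,
            ((q : ℚ) ^ j - (q : ℚ) ^ (j - 1)) * ((((j - 1) / r : ℕ) : ℚ) - (d : ℚ)))
            = (d : ℚ) - (((d : ℚ) - ((k / r : ℕ) : ℚ)) * (q : ℚ) ^ k +
              (q : ℚ) ^ r * (((q : ℚ) ^ (r * (k / r)) - 1) / ((q : ℚ) ^ r - 1))) := by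
          linarith [ih]
        rw [hS]
        field_simp
        ring

/-- the arithmetic identity underlying Proposition 3.14.  With
`q ≥ 2`, `r ≥ 1`, `d ≥ 1`, `k = k₀ + s·r`, `0 ≤ k₀ < r`, `0 ≤ s ≤ d`, `1 ≤ k ≤ rd`, and
`m_j = ⌊(j−1)/r⌋ − d` the log-absolute-values of the characteristic sequence of the
`a`-torsion at the origin, one has
`d − ∑_{j=1}^{k} (q^j − q^{j-1})·m_j = (d−s)·q^k + q^r·(q^{rs} − 1)/(q^r − 1)`. -/
theorem log_spectral_norm_coefficient_form_origin
    (q r d s k₀ k : ℕ) (hq : 2 ≤ q) (hr : 1 ≤ r) (hd : 1 ≤ d)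
    (hk₀ : k₀ < r) (hs : s ≤ d) (hk : k = k₀ + s * r) (hk1 : 1 ≤ k) (hkd : k ≤ r * d) :
    (d : ℚ) - ∑ j ∈ Finset.Icc 1 k,
        ((q : ℚ) ^ j - (q : ℚ) ^ (j - 1)) * ((((j - 1) / r : ℕ) : ℚ) - (d : ℚ)) =
      ((d : ℚ) - (s : ℚ)) * (q : ℚ) ^ k +
        (q : ℚ) ^ r * (((q : ℚ) ^ (r * s) - 1) / ((q : ℚ) ^ r - 1)) := by
  have hs' : k / r = s := by
    subst hk
    rw [Nat.add_mul_div_right k₀ s (by omega : 0 < r), Nat.div_eq_of_lt hk₀, zero_add]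
  have H := aux_sum q r d hq hr k hk1
  rw [hs'] at H
  exact H
end

section
/- For the Moore-type determinant M^{(2)}(ω₁,ω₂,ω₃) = det of the matrix with rows (ωᵢ, ωᵢ^q, ωᵢ^{q³}) (i = 1,2,3), regarded as a homogeneous polynomial in ω₁,ω₂,ω₃ over 𝔽_q, M^{(2)} vanishes on the hyperplane ω₁ = 0 to order exactly 1; equivalently, the determinant M^{(2)}(0, ω₂, ω₃) vanishes identically, while ∂M^{(2)}/∂ω₁ evaluated at ω₁ = 0 equals the 2×2 Moore-type minor det((ω₂^q, ω₂^{q³}),(ω₃^q, ω₃^{q³})), which is not identically zero. -/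
open MvPolynomial

/-- Over `𝔽_q`, let
`M⁽²⁾(ω₁,ω₂,ω₃) = det (ωᵢ, ωᵢ^q, ωᵢ^{q³})ᵢ` be the Moore-type determinant, a polynomial
in `ω₁, ω₂, ω₃`.  Then substituting `ω₁ = 0` makes `M⁽²⁾` vanish identically, while
`∂M⁽²⁾/∂ω₁` evaluated at `ω₁ = 0` equals the 2×2 Moore-type minor
`det ((ω₂^q, ω₂^{q³}), (ω₃^q, ω₃^{q³}))`, which is not identically zero.  (So `M⁽²⁾`
vanishes to order exactly `1` along the hyperplane `ω₁ = 0`.) -/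
theorem moore_M2_vanishing_order_one
    {F : Type*} [Field F] [Fintype F]
    (q : ℕ) (hq : Fintype.card F = q) :
    (MvPolynomial.aeval (fun i : Fin 3 => if i = 0 then (0 : MvPolynomial (Fin 3) F) else X i))
        (Matrix.det (Matrix.of fun i j : Fin 3 =>
          (X i : MvPolynomial (Fin 3) F) ^ (![1, q, q ^ 3] j))) = 0 ∧
    (MvPolynomial.aeval (fun i : Fin 3 => if i = 0 then (0 : MvPolynomial (Fin 3) F) else X i))
        (MvPolynomial.pderiv (0 : Fin 3)
          (Matrix.det (Matrix.of fun i j : Fin 3 =>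
            (X i : MvPolynomial (Fin 3) F) ^ (![1, q, q ^ 3] j)))) =
      Matrix.det (Matrix.of fun i j : Fin 2 =>
        (X (i.succ) : MvPolynomial (Fin 3) F) ^ (![q, q ^ 3] j)) ∧
    Matrix.det (Matrix.of fun i j : Fin 2 =>
        (X (i.succ) : MvPolynomial (Fin 3) F) ^ (![q, q ^ 3] j)) ≠ 0 := by
  have hq2 : 2 ≤ q := hq ▸ Fintype.one_lt_card
  have h1 : q ≠ 0 := by omega
  have hlt : q < q ^ 3 := by
    calc q < q * q * q := by nlinarith
    _ = q ^ 3 := by ring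
  have hcast : ((q : MvPolynomial (Fin 3) F)) = 0 := by
    have : ((q : F)) = 0 := hq ▸ Nat.cast_card_eq_zero F
    rw [← MvPolynomial.C_eq_coe_nat, this, map_zero]
  refine ⟨?_, ?_, ?_⟩
  · simp [Matrix.det_fin_three, zero_pow, h1]
  · simp [Matrix.det_fin_three, Matrix.det_fin_two, pderiv_mul, pderiv_pow, pderiv_X,
      zero_pow, h1, hcast]
    ring
  · intro h
    have hne : Finsupp.single (1 : Fin 3) (q^3) + Finsupp.single (2 : Fin 3) q ≠
        Finsupp.single (1 : Fin 3) q + Finsupp.single (2 : Fin 3) (q^3) := by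
      intro he
      have := congrArg (fun f => f (1 : Fin 3)) he
      simp [Finsupp.single_apply] at this
      omega
    have := congrArg (coeff (Finsupp.single (1 : Fin 3) q + Finsupp.single (2 : Fin 3) (q^3))) h
    simp [Matrix.det_fin_two, X_pow_eq_monomial, monomial_mul, coeff_monomial, hne] at this
end
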